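/- arXiv:2211.02091 — 6 statements merged into one kernel-verified Lean document; each statement's English description precedes it below -/
import Mathlib

section
/- If a predictor θ* satisfies that for every other predictor θ' the sum over agents of u_i(θ')/u_i(θ*) is at most n, then θ* is core-stable: there is no coalition S and predictor θ' with (|S|/n)·u_i(θ') ≥ u_i(θ*) for all i ∈ S with at least one strict inequality. -/
/-- If a predictor `θ*` satisfies that for every other predictor `θ'` the sum over
agents of `u i θ' / u i θ*` is at most `n`, then `θ*` is core-stable. -/
theorem sum_ratio_le_n_imp_core_stable
    {P : Type*} (n : ℕ) (u : Fin n → P → ℝ)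
    (hu : ∀ i θ, 0 < u i θ)
    (θstar : P)
    (h : ∀ θ' : P, ∑ i : Fin n, u i θ' / u i θstar ≤ (n : ℝ)) :
    ¬ ∃ (θ' : P) (S : Finset (Fin n)), S.Nonempty ∧
        (∀ i ∈ S, (S.card : ℝ) / (n : ℝ) * u i θ' ≥ u i θstar) ∧
        (∃ i ∈ S, (S.card : ℝ) / (n : ℝ) * u i θ' > u i θstar) := by
  rintro ⟨θ', S, hS, hall, i0, hi0, hstrict⟩
  have hn : 0 < (n : ℝ) := by
    have : 0 < n := Nat.pos_of_ne_zero (by rintro rfl; exact i0.elim0)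
    exact_mod_cast this
  have hcard : 0 < (S.card : ℝ) := by exact_mod_cast Finset.card_pos.mpr hS
  have key : ∀ i ∈ S, (n : ℝ) / (S.card : ℝ) ≤ u i θ' / u i θstar := by
    intro i hi
    have h1 := hall i hi
    rw [ge_iff_le, div_mul_eq_mul_div, le_div_iff₀ hn] at h1
    rw [div_le_div_iff₀ hcard (hu i θstar)]
    nlinarith [hu i θ', hu i θstar]
  have keyst : (n : ℝ) / (S.card : ℝ) < u i0 θ' / u i0 θstar := by
    rw [gt_iff_lt, div_mul_eq_mul_div, lt_div_iff₀ hn] at hstrict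
    rw [div_lt_div_iff₀ hcard (hu i0 θstar)]
    nlinarith [hu i0 θ', hu i0 θstar]
  have hsumS : (n : ℝ) < ∑ i ∈ S, u i θ' / u i θstar := by
    have := Finset.sum_lt_sum key ⟨i0, hi0, keyst⟩
    have hc : ∑ _i ∈ S, (n : ℝ) / (S.card : ℝ) = (n : ℝ) := by
      rw [Finset.sum_const, nsmul_eq_mul]
      field_simp
    linarith [hc ▸ this]
  have hle : ∑ i ∈ S, u i θ' / u i θstar ≤ ∑ i : Fin n, u i θ' / u i θstar :=
    Finset.sum_le_sum_of_subset_of_nonneg (Finset.subset_univ S)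
      (fun i _ _ => le_of_lt (div_pos (hu i θ') (hu i θstar)))
  linarith [h θ']
end

section
/- If θ ∈ P maximizes the map d ↦ Σ_{i∈[n]} u_i(d)/u_i(θ) over d ∈ P (i.e., θ is a fixed point of the correspondence φ(θ) = argmax_d Σ_i u_i(d)/u_i(θ)), then θ is core-stable. -/
/-- If `θ` maximizes `d ↦ ∑ i, u i d / u i θ` over `P` (i.e. `θ` is a fixed
point of the correspondence `φ`), then `θ` is core-stable. -/
theorem fixed_point_imp_core_stable
    {P : Type*} (n : ℕ) (u : Fin n → P → ℝ)
    (hu : ∀ i θ, 0 < u i θ)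
    (θ : P)
    (hmax : ∀ d : P, ∑ i : Fin n, u i d / u i θ ≤ ∑ i : Fin n, u i θ / u i θ) :
    ¬ ∃ (θ' : P) (S : Finset (Fin n)), S.Nonempty ∧
        (∀ i ∈ S, (S.card : ℝ) / (n : ℝ) * u i θ' ≥ u i θ) ∧
        (∃ i ∈ S, (S.card : ℝ) / (n : ℝ) * u i θ' > u i θ) := by
  rintro ⟨θ', S, hS, hge, i₀, hi₀, hstrict⟩
  have hnpos : (0 : ℝ) < n := by
    have : 0 < n := Fin.pos i₀
    exact_mod_cast this
  have hcard : (0 : ℝ) < S.card := by exact_mod_cast Finset.card_pos.mpr hS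
  -- For each i ∈ S, u i θ' / u i θ ≥ n / S.card
  have key : ∀ i ∈ S, (n : ℝ) / S.card ≤ u i θ' / u i θ := by
    intro i hi
    have h := hge i hi
    rw [ge_iff_le, div_mul_eq_mul_div, le_div_iff₀ hnpos] at h
    rw [div_le_div_iff₀ hcard (hu i θ)]
    nlinarith [hu i θ, hu i θ']
  have keys : (n : ℝ) / S.card < u i₀ θ' / u i₀ θ := by
    rw [gt_iff_lt, div_mul_eq_mul_div, lt_div_iff₀ hnpos] at hstrict
    rw [div_lt_div_iff₀ hcard (hu i₀ θ)]
    nlinarith [hu i₀ θ, hu i₀ θ']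
  have hsumS : (n : ℝ) < ∑ i ∈ S, u i θ' / u i θ := by
    have h1 : ∑ i ∈ S, (n : ℝ) / S.card < ∑ i ∈ S, u i θ' / u i θ :=
      Finset.sum_lt_sum key ⟨i₀, hi₀, keys⟩
    have h2 : ∑ i ∈ S, (n : ℝ) / S.card = n := by
      rw [Finset.sum_const, nsmul_eq_mul]
      field_simp
    linarith
  have hsum : (n : ℝ) < ∑ i : Fin n, u i θ' / u i θ := by
    have hle : ∑ i ∈ S, u i θ' / u i θ ≤ ∑ i : Fin n, u i θ' / u i θ :=
      Finset.sum_le_sum_of_subset_of_nonneg (Finset.subset_univ S)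
        (fun i _ _ => le_of_lt (div_pos (hu i θ') (hu i θ)))
    linarith
  have hone : ∑ i : Fin n, u i θ / u i θ = n := by
    rw [Finset.sum_congr rfl (fun i _ => div_self (hu i θ).ne')]
    simp
  have := hmax θ'
  rw [hone] at this
  linarith
end

section
/- If each utility function u_i is concave on a convex set P and θ* maximizes Σ_{i∈[n]} log(u_i(θ)) over θ ∈ P, then θ* is core-stable. -/
/-!
Write `a i = u i θ*` and `b i = u i θ'`. Along the segment from `θ*` to `θ'`, concavity bounds
the Nash welfare `∑ i, log (u i θ)` from below by `t ↦ ∑ i, log (a i + t * (b i - a i))`, which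
therefore also attains its maximum over `[0, 1]` at `t = 0`. Its right derivative there,
`∑ i, b i / a i - n`, must then be nonpositive. A blocking coalition `S`, on the other hand, has
`b i / a i ≥ n / |S|` for every member, with one strict inequality, so its members alone push
`∑ i, b i / a i` above `n`.
-/

open Finset Set

theorem sum_div_le_card_of_isMaxOn_sum_log {ι : Type*} [Fintype ι] {a b : ι → ℝ}
    (ha : ∀ i, 0 < a i)
    (hmax : IsMaxOn (fun t : ℝ => ∑ i, Real.log (a i + t * (b i - a i))) (Icc 0 1) 0) :
    ∑ i, b i / a i ≤ Fintype.card ι := by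
  have hderiv : HasDerivAt (fun t : ℝ => ∑ i, Real.log (a i + t * (b i - a i)))
      (∑ i, (b i - a i) / a i) 0 := by
    refine HasDerivAt.fun_sum fun i _ => ?_
    have hline : HasDerivAt (fun t : ℝ => a i + t * (b i - a i)) (b i - a i) 0 := by
      simpa using (hasDerivAt_mul_const (b i - a i)).const_add (a i)
    simpa using hline.log (by simpa using (ha i).ne')
  have hone : (1 : ℝ) ∈ posTangentConeAt (Icc 0 1) (0 : ℝ) :=
    mem_posTangentConeAt_of_segment_subset (by simp [segment_eq_Icc])
  have hslope : ∑ i, (b i - a i) / a i ≤ 0 := by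
    simpa using hmax.localize.hasFDerivWithinAt_nonpos hderiv.hasDerivWithinAt hone
  have hsplit : ∑ i, (b i - a i) / a i = ∑ i, b i / a i - Fintype.card ι := by
    simp [sub_div, div_self (ha _).ne', sum_sub_distrib]
  linarith

theorem sum_div_le_card_of_isMaxOn_sum_log_of_concaveOn {E ι : Type*} [AddCommGroup E]
    [Module ℝ E] [Fintype ι] {P : Set E} (hP : Convex ℝ P) {u : ι → E → ℝ}
    (hconc : ∀ i, ConcaveOn ℝ P (u i)) (hpos : ∀ i, ∀ θ ∈ P, 0 < u i θ) {θstar θ' : E}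
    (hθstar : θstar ∈ P) (hθ' : θ' ∈ P)
    (hmax : IsMaxOn (fun θ => ∑ i, Real.log (u i θ)) P θstar) :
    ∑ i, u i θ' / u i θstar ≤ Fintype.card ι := by
  refine sum_div_le_card_of_isMaxOn_sum_log (fun i => hpos i θstar hθstar) fun t ht => ?_
  obtain ⟨ht0, ht1⟩ := ht
  have hmem : (1 - t) • θstar + t • θ' ∈ P :=
    hP hθstar hθ' (sub_nonneg.2 ht1) ht0 (sub_add_cancel 1 t)
  have hlower : ∀ i,
      u i θstar + t * (u i θ' - u i θstar) ≤ u i ((1 - t) • θstar + t • θ') := by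
    intro i
    have h := (hconc i).2 hθstar hθ' (sub_nonneg.2 ht1) ht0 (sub_add_cancel 1 t)
    simp only [smul_eq_mul] at h
    linarith
  have hlower_pos : ∀ i, 0 < u i θstar + t * (u i θ' - u i θstar) := by
    intro i
    have h := convex_Ioi (0 : ℝ) (hpos i θstar hθstar) (hpos i θ' hθ')
      (sub_nonneg.2 ht1) ht0 (sub_add_cancel 1 t)
    simp only [smul_eq_mul, Set.mem_Ioi] at h
    linarith
  calc ∑ i, Real.log (u i θstar + t * (u i θ' - u i θstar))
      ≤ ∑ i, Real.log (u i ((1 - t) • θstar + t • θ')) :=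
        sum_le_sum fun i _ => Real.log_le_log (hlower_pos i) (hlower i)
    _ ≤ ∑ i, Real.log (u i θstar) := hmax hmem
    _ = ∑ i, Real.log (u i θstar + 0 * (u i θ' - u i θstar)) := by simp

theorem card_lt_sum_div_of_blocking {ι : Type*} [Fintype ι] {a b : ι → ℝ}
    (ha : ∀ i, 0 < a i) (hb : ∀ i, 0 < b i) {S : Finset ι}
    (hge : ∀ i ∈ S, a i ≤ (#S : ℝ) / Fintype.card ι * b i)
    (hgt : ∃ i ∈ S, a i < (#S : ℝ) / Fintype.card ι * b i) :
    (Fintype.card ι : ℝ) < ∑ i, b i / a i := by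
  obtain ⟨j, hjS, hj⟩ := hgt
  have hS : (0 : ℝ) < #S := by exact_mod_cast card_pos.2 ⟨j, hjS⟩
  have hN : (0 : ℝ) < Fintype.card ι := by exact_mod_cast Fintype.card_pos_iff.2 ⟨j⟩
  have hratio : ∀ i, a i ≤ (#S : ℝ) / Fintype.card ι * b i →
      (Fintype.card ι : ℝ) / #S ≤ b i / a i := fun i h => by
    rw [div_mul_eq_mul_div, le_div_iff₀ hN] at h
    rw [div_le_div_iff₀ hS (ha i)]
    linarith
  have hratio_lt : (Fintype.card ι : ℝ) / #S < b j / a j := by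
    rw [div_lt_div_iff₀ hS (ha j)]
    rw [div_mul_eq_mul_div, lt_div_iff₀ hN] at hj
    linarith
  calc (Fintype.card ι : ℝ)
      = ∑ _i ∈ S, (Fintype.card ι : ℝ) / #S := by
        rw [sum_const, nsmul_eq_mul]; field_simp
    _ < ∑ i ∈ S, b i / a i :=
        sum_lt_sum (fun i hi => hratio i (hge i hi)) ⟨j, hjS, hratio_lt⟩
    _ ≤ ∑ i, b i / a i :=
        sum_le_sum_of_subset_of_nonneg (subset_univ S) fun i _ _ => (div_pos (hb i) (ha i)).le

theorem log_nash_maximizer_core_stable_general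
    {d : ℕ} (P : Set (EuclideanSpace ℝ (Fin d))) (hP : Convex ℝ P)
    (n : ℕ) (u : Fin n → EuclideanSpace ℝ (Fin d) → ℝ)
    (hconc : ∀ i, ConcaveOn ℝ P (u i))
    (hpos : ∀ i, ∀ θ ∈ P, 0 < u i θ)
    (θstar : EuclideanSpace ℝ (Fin d)) (hθstar : θstar ∈ P)
    (hmax : ∀ θ ∈ P, ∑ i : Fin n, Real.log (u i θ) ≤ ∑ i : Fin n, Real.log (u i θstar)) :
    ¬ ∃ θ' ∈ P, ∃ S : Finset (Fin n), S.Nonempty ∧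
        (∀ i ∈ S, (S.card : ℝ) / (n : ℝ) * u i θ' ≥ u i θstar) ∧
        (∃ i ∈ S, (S.card : ℝ) / (n : ℝ) * u i θ' > u i θstar) := by
  rintro ⟨θ', hθ', S, -, hge, hgt⟩
  have hle := sum_div_le_card_of_isMaxOn_sum_log_of_concaveOn hP hconc hpos hθstar hθ' hmax
  have hlt := card_lt_sum_div_of_blocking (fun i => hpos i θstar hθstar)
    (fun i => hpos i θ' hθ') (S := S) (by simpa using hge) (by simpa using hgt)
  exact (hlt.trans_le hle).false

/-- If each utility is concave, strictly positive and differentiable on a convex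
set `P`, then any maximizer of `∑ i, log (u i θ)` over `P` is core-stable. -/
theorem log_nash_maximizer_core_stable
    {d : ℕ} (P : Set (EuclideanSpace ℝ (Fin d))) (hP : Convex ℝ P)
    (n : ℕ) (u : Fin n → EuclideanSpace ℝ (Fin d) → ℝ)
    (hconc : ∀ i, ConcaveOn ℝ P (u i))
    (hpos : ∀ i, ∀ θ ∈ P, 0 < u i θ)
    (hdiff : ∀ i, Differentiable ℝ (u i))
    (θstar : EuclideanSpace ℝ (Fin d)) (hθstar : θstar ∈ P)
    (hmax : ∀ θ ∈ P, ∑ i : Fin n, Real.log (u i θ) ≤ ∑ i : Fin n, Real.log (u i θstar)) :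
    ¬ ∃ θ' ∈ P, ∃ S : Finset (Fin n), S.Nonempty ∧
        (∀ i ∈ S, (S.card : ℝ) / (n : ℝ) * u i θ' ≥ u i θstar) ∧
        (∃ i ∈ S, (S.card : ℝ) / (n : ℝ) * u i θ' > u i θstar) :=
  log_nash_maximizer_core_stable_general P hP n u hconc hpos θstar hθstar hmax
end

section
/- Suppose each u_i is β-smooth on the ball B(θ, d) (i.e., u_i(θ') ≤ u_i(θ) + ∇u_i(θ)ᵀ(θ'−θ) + (β/2)‖θ'−θ‖² for ‖θ'−θ‖ ≤ d), the gradient of L(θ) = Σ_i log u_i(θ) satisfies ‖∇L(θ)‖₂ ≤ ε, and d = (−ε + √(ε² + 2β(k−1)n·Σ_i u_i(θ)⁻¹)) / (β·Σ_i u_i(θ)⁻¹). Then for every θ' with ‖θ'−θ‖₂ < d, we have Σ_{i∈[n]} u_i(θ')/u_i(θ) < k·n. -/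
/-!
Dividing the smoothness bound for `u i` by `u i θ` and summing gives, with `S = ∑ i, (u i θ)⁻¹`
and `r = ‖θ' - θ‖`, the bound `∑ i, u i θ' / u i θ ≤ n + ⟪∇L θ, θ' - θ⟫ + βS/2 · r² ≤
n + εr + βS/2 · r²`; and `d` is the larger root of `βS/2 · x² + εx = (k - 1) n`.
-/

open Finset RealInnerProductSpace

/-- The claim is `(2ar + b)² < b² + 4ac`; when `a = 0` the bound on `r` reads `r < x / 0 = 0`. -/
theorem quadratic_lt_of_lt_root {a b c r : ℝ} (ha : 0 ≤ a) (hb : 0 ≤ b) (hr : 0 ≤ r)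
    (hrd : r < (-b + √(b ^ 2 + 4 * a * c)) / (2 * a)) : a * r ^ 2 + b * r < c := by
  rcases ha.eq_or_lt with rfl | ha
  · simp only [mul_zero, div_zero] at hrd
    linarith
  have hlt : 2 * a * r + b < √(b ^ 2 + 4 * a * c) := by
    rw [lt_div_iff₀ (by positivity)] at hrd
    linarith
  rw [Real.lt_sqrt (by positivity)] at hlt
  nlinarith

theorem sum_div_le_of_forall_le_add_inner {ι E : Type*} [Fintype ι] [NormedAddCommGroup E]
    [InnerProductSpace ℝ E] {u u' : ι → ℝ} {g : ι → E} {v : E} {C : ℝ} (hu : ∀ i, 0 < u i)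
    (h : ∀ i, u' i ≤ u i + ⟪g i, v⟫ + C) :
    ∑ i, u' i / u i ≤ Fintype.card ι + ⟪∑ i, (u i)⁻¹ • g i, v⟫ + (∑ i, (u i)⁻¹) * C := by
  have hterm : ∀ i, u' i / u i ≤ 1 + (u i)⁻¹ * ⟪g i, v⟫ + (u i)⁻¹ * C := fun i => by
    rw [div_le_iff₀ (hu i)]
    have := (hu i).ne'
    field_simp
    linarith [h i]
  calc ∑ i, u' i / u i ≤ ∑ i, (1 + (u i)⁻¹ * ⟪g i, v⟫ + (u i)⁻¹ * C) :=
        sum_le_sum fun i _ => hterm i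
    _ = _ := by
        simp only [sum_add_distrib, sum_const, card_univ, sum_inner, real_inner_smul_left,
          sum_mul, nsmul_eq_mul, mul_one]

theorem smooth_approx_stationary_sum_ratio_lt_kn_general
    {p : ℕ} (n : ℕ) (u : Fin n → EuclideanSpace ℝ (Fin p) → ℝ)
    (hpos : ∀ i θ, 0 < u i θ)
    (β k ε d : ℝ) (hβ : 0 < β) (hε : 0 ≤ ε)
    (θ : EuclideanSpace ℝ (Fin p))
    (hsmooth : ∀ i, ∀ θ' : EuclideanSpace ℝ (Fin p), ‖θ' - θ‖ ≤ d →
      u i θ' ≤ u i θ + inner ℝ (gradient (u i) θ) (θ' - θ) + β / 2 * ‖θ' - θ‖ ^ 2)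
    (hgrad : ‖∑ i : Fin n, (u i θ)⁻¹ • gradient (u i) θ‖ ≤ ε)
    (hd : d = (-ε + Real.sqrt (ε ^ 2 + 2 * β * (k - 1) * n * ∑ i : Fin n, (u i θ)⁻¹)) /
      (β * ∑ i : Fin n, (u i θ)⁻¹)) :
    ∀ θ' : EuclideanSpace ℝ (Fin p), ‖θ' - θ‖ < d →
      ∑ i : Fin n, u i θ' / u i θ < k * n := by
  intro θ' hθ'
  set S := ∑ i : Fin n, (u i θ)⁻¹
  have hsum := sum_div_le_of_forall_le_add_inner (fun i => hpos i θ) fun i => hsmooth i θ' hθ'.le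
  have hinner : ⟪∑ i, (u i θ)⁻¹ • gradient (u i) θ, θ' - θ⟫ ≤ ε * ‖θ' - θ‖ :=
    (real_inner_le_norm _ _).trans (mul_le_mul_of_nonneg_right hgrad (norm_nonneg _))
  have hquad : β * S / 2 * ‖θ' - θ‖ ^ 2 + ε * ‖θ' - θ‖ < (k - 1) * n := by
    have hS : 0 ≤ S := sum_nonneg fun i _ => (inv_pos.2 (hpos i θ)).le
    refine quadratic_lt_of_lt_root (by positivity) hε (norm_nonneg _) ?_
    have hroot : d = (-ε + √(ε ^ 2 + 4 * (β * S / 2) * ((k - 1) * n))) / (2 * (β * S / 2)) := by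
      rw [hd]
      ring_nf
    exact hroot ▸ hθ'
  rw [Fintype.card_fin] at hsum
  linarith

/-- Under β-smoothness of each `u i` on the ball of radius `d` around `θ`,
an ε-bound on the gradient of `L = ∑ i log (u i ·)`, and the stated value of `d`,
every `θ'` with `‖θ' - θ‖ < d` satisfies `∑ i, u i θ' / u i θ < k·n`. -/
theorem smooth_approx_stationary_sum_ratio_lt_kn
    {p : ℕ} (n : ℕ) (u : Fin n → EuclideanSpace ℝ (Fin p) → ℝ)
    (hpos : ∀ i θ, 0 < u i θ)
    (hdiff : ∀ i, Differentiable ℝ (u i))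
    (β k ε d : ℝ) (hβ : 0 < β) (hk : 1 < k) (hε : 0 ≤ ε)
    (θ : EuclideanSpace ℝ (Fin p))
    (hsmooth : ∀ i, ∀ θ' : EuclideanSpace ℝ (Fin p), ‖θ' - θ‖ ≤ d →
      u i θ' ≤ u i θ + inner ℝ (gradient (u i) θ) (θ' - θ) + β / 2 * ‖θ' - θ‖ ^ 2)
    (hgrad : ‖∑ i : Fin n, (u i θ)⁻¹ • gradient (u i) θ‖ ≤ ε)
    (hd : d = (-ε + Real.sqrt (ε ^ 2 + 2 * β * (k - 1) * n * ∑ i : Fin n, (u i θ)⁻¹)) /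
      (β * ∑ i : Fin n, (u i θ)⁻¹)) :
    ∀ θ' : EuclideanSpace ℝ (Fin p), ‖θ' - θ‖ < d →
      ∑ i : Fin n, u i θ' / u i θ < k * n :=
  smooth_approx_stationary_sum_ratio_lt_kn_general n u hpos β k ε d hβ hε θ hsmooth hgrad hd
end

section
/- If each u_i is concave, strictly positive and differentiable on convex P, and θ* maximizes Σ_{i∈[n]} w_i·log(u_i(θ)) over P with weights w_i > 0, then for every θ' ∈ P, Σ_{i∈[n]} w_i·u_i(θ')/u_i(θ*) ≤ Σ_{i∈[n]} w_i; consequently θ* is weighted core-stable. -/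
/-! Along the chord `θₜ = (1 - t) • θ* + t • θ'`, concavity gives
`u i θₜ ≥ (1 - t) * u i θ* + t * u i θ'`, so `φ t = ∑ i, w i * log ((1 - t) * u i θ* + t * u i θ')`
is maximal on `[0, 1]` at `t = 0`; hence `φ' 0 = ∑ i, w i * (u i θ' / u i θ* - 1) ≤ 0`.
A blocking coalition `S` would have `u i θ' / u i θ* ≥ W / W_S` on `S` (with `W`, `W_S` the total
weights of everyone and of `S`), strictly for some member, which pushes the weighted ratio sum
above `W`. -/

open Finset Real Set

section

variable {ι : Type*} [Fintype ι]

lemma hasDerivAt_sum_mul_log_one_sub_mul_add_mul (w a b : ι → ℝ) (ha : ∀ i, a i ≠ 0) :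
    HasDerivAt (fun t => ∑ i, w i * log ((1 - t) * a i + t * b i))
      (∑ i, w i * ((b i - a i) / a i)) 0 := by
  refine HasDerivAt.fun_sum fun i _ => ?_
  have hline : HasDerivAt (fun t : ℝ => (1 - t) * a i + t * b i) (b i - a i) 0 := by
    simpa [neg_add_eq_sub] using (((hasDerivAt_id (0 : ℝ)).const_sub 1).mul_const (a i)).fun_add
      ((hasDerivAt_id (0 : ℝ)).mul_const (b i))
  simpa using ((hline.log (by simpa using ha i)).const_mul (w i))

lemma nonpos_of_hasDerivAt_of_isMaxOn_Icc {g : ℝ → ℝ} {L : ℝ} (hg : HasDerivAt g L 0)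
    (hmax : IsMaxOn g (Icc 0 1) 0) : L ≤ 0 := by
  have hcone : (1 : ℝ) ∈ posTangentConeAt (Icc 0 1) 0 :=
    mem_posTangentConeAt_of_segment_subset (by simp [segment_eq_Icc])
  simpa using hmax.localize.hasFDerivWithinAt_nonpos hg.hasFDerivAt.hasFDerivWithinAt hcone

lemma sum_mul_div_le_sum_of_sum_mul_log_le {w a b : ι → ℝ} (ha : ∀ i, 0 < a i)
    (hle : ∀ t ∈ Icc (0 : ℝ) 1,
      ∑ i, w i * log ((1 - t) * a i + t * b i) ≤ ∑ i, w i * log (a i)) :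
    ∑ i, w i * b i / a i ≤ ∑ i, w i := by
  have hderiv := hasDerivAt_sum_mul_log_one_sub_mul_add_mul w a b fun i => (ha i).ne'
  have hL := nonpos_of_hasDerivAt_of_isMaxOn_Icc hderiv fun t ht => by simpa using hle t ht
  have hterm : ∀ i, w i * ((b i - a i) / a i) = w i * b i / a i - w i := fun i => by
    field_simp [(ha i).ne']
  simp only [hterm, sum_sub_distrib] at hL
  linarith

lemma sum_mul_div_le_sum_of_isMaxOn_sum_mul_log {E : Type*} [AddCommGroup E] [Module ℝ E]
    {s : Set E} (hs : Convex ℝ s) {u : ι → E → ℝ} {w : ι → ℝ}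
    (hu : ∀ i, ConcaveOn ℝ s (u i)) (hpos : ∀ i, ∀ θ ∈ s, 0 < u i θ) (hw : ∀ i, 0 ≤ w i)
    {x y : E} (hx : x ∈ s) (hy : y ∈ s)
    (hmax : IsMaxOn (fun θ => ∑ i, w i * log (u i θ)) s x) :
    ∑ i, w i * u i y / u i x ≤ ∑ i, w i := by
  refine sum_mul_div_le_sum_of_sum_mul_log_le (fun i => hpos i x hx) fun t ⟨ht₀, ht₁⟩ => ?_
  have hmem : (1 - t) • x + t • y ∈ s := hs hx hy (by linarith) ht₀ (by ring)
  calc ∑ i, w i * log ((1 - t) * u i x + t * u i y)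
      ≤ ∑ i, w i * log (u i ((1 - t) • x + t • y)) := by
        refine sum_le_sum fun i _ => mul_le_mul_of_nonneg_left ?_ (hw i)
        have hchord_pos : 0 < (1 - t) * u i x + t * u i y :=
          convex_Ioi (0 : ℝ) (hpos i x hx) (hpos i y hy) (sub_nonneg.2 ht₁) ht₀ (by ring)
        exact log_le_log hchord_pos ((hu i).2 hx hy (sub_nonneg.2 ht₁) ht₀ (by ring))
    _ ≤ ∑ i, w i * log (u i x) := hmax hmem

lemma sum_lt_sum_mul_div_of_blocking {w a b : ι → ℝ} (hw : ∀ i, 0 < w i)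
    (ha : ∀ i, 0 < a i) (hb : ∀ i, 0 ≤ b i) {S : Finset ι}
    (hweak : ∀ i ∈ S, a i ≤ (∑ j ∈ S, w j) / (∑ j, w j) * b i)
    (hstrict : ∃ i ∈ S, a i < (∑ j ∈ S, w j) / (∑ j, w j) * b i) :
    ∑ i, w i < ∑ i, w i * b i / a i := by
  set W := ∑ j, w j
  set WS := ∑ j ∈ S, w j
  obtain ⟨i₀, hi₀, hi₀_strict⟩ := hstrict
  have hW : 0 < W := sum_pos (fun j _ => hw j) ⟨i₀, mem_univ _⟩
  have hWS : 0 < WS := sum_pos (fun j _ => hw j) ⟨i₀, hi₀⟩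
  have hterm : ∀ i ∈ S, w i * (W / WS) ≤ w i * b i / a i := fun i hi => by
    have h := hweak i hi
    rw [div_mul_eq_mul_div, le_div_iff₀ hW] at h
    rw [mul_div_assoc, mul_le_mul_iff_right₀ (hw i), div_le_div_iff₀ hWS (ha i)]
    linarith
  have hterm₀ : w i₀ * (W / WS) < w i₀ * b i₀ / a i₀ := by
    rw [div_mul_eq_mul_div, lt_div_iff₀ hW] at hi₀_strict
    rw [mul_div_assoc, mul_lt_mul_iff_right₀ (hw i₀), div_lt_div_iff₀ hWS (ha i₀)]
    linarith
  calc W = ∑ i ∈ S, w i * (W / WS) := by rw [← sum_mul, mul_div_cancel₀ _ hWS.ne']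
    _ < ∑ i ∈ S, w i * b i / a i := sum_lt_sum hterm ⟨i₀, hi₀, hterm₀⟩
    _ ≤ ∑ i, w i * b i / a i := sum_le_sum_of_subset_of_nonneg (subset_univ S)
        fun i _ _ => div_nonneg (mul_nonneg (hw i).le (hb i)) (ha i).le

end

theorem weighted_log_nash_maximizer_weighted_core_stable_general
    {d : ℕ} (P : Set (EuclideanSpace ℝ (Fin d))) (hP : Convex ℝ P)
    (n : ℕ) (u : Fin n → EuclideanSpace ℝ (Fin d) → ℝ) (w : Fin n → ℝ)
    (hconc : ∀ i, ConcaveOn ℝ P (u i))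
    (hpos : ∀ i, ∀ θ ∈ P, 0 < u i θ)
    (hw : ∀ i, 0 < w i)
    (θstar : EuclideanSpace ℝ (Fin d)) (hθstar : θstar ∈ P)
    (hmax : ∀ θ ∈ P, ∑ i : Fin n, w i * Real.log (u i θ) ≤
      ∑ i : Fin n, w i * Real.log (u i θstar)) :
    (∀ θ' ∈ P, ∑ i : Fin n, w i * u i θ' / u i θstar ≤ ∑ i : Fin n, w i) ∧
    ¬ ∃ θ' ∈ P, ∃ S : Finset (Fin n), S.Nonempty ∧
        (∀ i ∈ S, (∑ j ∈ S, w j) / (∑ j : Fin n, w j) * u i θ' ≥ u i θstar) ∧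
        (∃ i ∈ S, (∑ j ∈ S, w j) / (∑ j : Fin n, w j) * u i θ' > u i θstar) := by
  have hratio : ∀ θ' ∈ P, ∑ i, w i * u i θ' / u i θstar ≤ ∑ i, w i := fun θ' hθ' =>
    sum_mul_div_le_sum_of_isMaxOn_sum_mul_log hP hconc hpos (fun i => (hw i).le) hθstar hθ'
      (isMaxOn_iff.2 hmax)
  refine ⟨hratio, ?_⟩
  rintro ⟨θ', hθ', S, -, hweak, hstrict⟩
  exact (hratio θ' hθ').not_gt <| sum_lt_sum_mul_div_of_blocking hw
    (fun i => hpos i θstar hθstar) (fun i => (hpos i θ' hθ').le) hweak hstrict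

/-- A maximizer `θ*` of the weighted log objective
`∑ i, w i · log (u i θ)` over convex `P` satisfies
`∑ i, w i · u i θ' / u i θ* ≤ ∑ i, w i` for all `θ' ∈ P`, and is weighted core-stable. -/
theorem weighted_log_nash_maximizer_weighted_core_stable
    {d : ℕ} (P : Set (EuclideanSpace ℝ (Fin d))) (hP : Convex ℝ P)
    (n : ℕ) (u : Fin n → EuclideanSpace ℝ (Fin d) → ℝ) (w : Fin n → ℝ)
    (hconc : ∀ i, ConcaveOn ℝ P (u i))
    (hpos : ∀ i, ∀ θ ∈ P, 0 < u i θ)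
    (hdiff : ∀ i, Differentiable ℝ (u i))
    (hw : ∀ i, 0 < w i)
    (θstar : EuclideanSpace ℝ (Fin d)) (hθstar : θstar ∈ P)
    (hmax : ∀ θ ∈ P, ∑ i : Fin n, w i * Real.log (u i θ) ≤
      ∑ i : Fin n, w i * Real.log (u i θstar)) :
    (∀ θ' ∈ P, ∑ i : Fin n, w i * u i θ' / u i θstar ≤ ∑ i : Fin n, w i) ∧
    ¬ ∃ θ' ∈ P, ∃ S : Finset (Fin n), S.Nonempty ∧
        (∀ i ∈ S, (∑ j ∈ S, w j) / (∑ j : Fin n, w j) * u i θ' ≥ u i θstar) ∧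
        (∃ i ∈ S, (∑ j ∈ S, w j) / (∑ j : Fin n, w j) * u i θ' > u i θstar) :=
  weighted_log_nash_maximizer_weighted_core_stable_general P hP n u w hconc hpos hw θstar hθstar
    hmax
end

section
/- Let n agents have squared-error losses ℓ_i(θ) = E_{(x,y)∼D_i}(θᵀx − y)² over finite empirical distributions D_i, and utilities u_i(θ) = M_i − ℓ_i(θ) with M_i large enough that u_i > 0 on a convex compact domain P. Then each u_i is concave on P, and any maximizer of Σ_i log u_i(θ) over P is core-stable. -/
/-!
Each utility is a constant minus a nonnegative combination of squares of affine functions, hence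
concave. If a coalition `S` blocked the Nash-product maximizer `θ⋆` with some `θ'`, the ratios
`rᵢ = uᵢ θ' / uᵢ θ⋆` would satisfy `rᵢ ≥ n / |S|` on `S`, strictly once, so `∑ᵢ rᵢ > n`.
But along the segment `θₜ = (1 - t) θ⋆ + t θ'` concavity gives
`∑ᵢ log uᵢ θₜ ≥ ∑ᵢ log uᵢ θ⋆ + ∑ᵢ log (1 + t (rᵢ - 1))`, and the right-hand correction has
derivative `∑ᵢ rᵢ - n > 0` at `t = 0`, contradicting maximality of `θ⋆`.
-/

open Real Set Filter Topology Finset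

theorem ConvexOn.finset_sum {ι E : Type*} [AddCommGroup E] [Module ℝ E] {s : Set E}
    (hs : Convex ℝ s) (t : Finset ι) {f : ι → E → ℝ} (hf : ∀ i ∈ t, ConvexOn ℝ s (f i)) :
    ConvexOn ℝ s fun x => ∑ i ∈ t, f i x := by
  classical
  induction t using Finset.induction_on with
  | empty => simpa using convexOn_const (0 : ℝ) hs
  | insert a t ha ih =>
    simp_rw [Finset.sum_insert ha]
    exact (hf a (mem_insert_self a t)).add (ih fun i hi => hf i (mem_insert_of_mem hi))

section LeastSquares

variable {E : Type*} [NormedAddCommGroup E] [InnerProductSpace ℝ E]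

theorem convexOn_sq_inner_sub (v : E) (c : ℝ) :
    ConvexOn ℝ univ fun θ : E => (inner ℝ θ v - c) ^ 2 := by
  have := (even_two.convexOn_pow (𝕜 := ℝ)).comp_affineMap
    ((innerSL ℝ v).toLinearMap.toAffineMap - AffineMap.const ℝ E c)
  simpa [Function.comp_def, real_inner_comm] using this

theorem convexOn_sum_sq_inner_sub {ι : Type*} (t : Finset ι) (x : ι → E) (y : ι → ℝ) :
    ConvexOn ℝ univ fun θ : E => ∑ j ∈ t, (inner ℝ θ (x j) - y j) ^ 2 :=
  ConvexOn.finset_sum convex_univ t fun j _ => convexOn_sq_inner_sub (x j) (y j)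

end LeastSquares

theorem sum_nonpos_of_sum_log_one_add_mul_nonpos {ι : Type*} [Fintype ι] (a : ι → ℝ)
    (h : ∀ t ∈ Ioo (0 : ℝ) 1, ∑ i, log (1 + t * a i) ≤ 0) : ∑ i, a i ≤ 0 := by
  set g : ℝ → ℝ := fun t => ∑ i, log (1 + t * a i)
  have hg : HasDerivAt g (∑ i, a i) 0 := by
    have := HasDerivAt.sum (u := univ) fun i _ =>
      (((hasDerivAt_id (0 : ℝ)).mul_const (a i)).const_add 1).log (by simp)
    simpa [g, Finset.sum_fn] using this
  by_contra! hpos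
  have hslope := (hasDerivAt_iff_tendsto_slope.mp hg).mono_left (nhdsGT_le_nhdsNE 0)
  obtain ⟨t, hslope_pos, ht⟩ :=
    ((hslope.eventually_const_lt hpos).and (Ioo_mem_nhdsGT one_pos)).exists
  have hg0 : g 0 = 0 := by simp [g]
  rw [slope_def_field, hg0, sub_zero, sub_zero] at hslope_pos
  exact (h t ht).not_gt ((div_pos_iff_of_pos_right ht.1).mp hslope_pos)

/-- The first-order optimality condition of the Nash product, derived from concavity alone. -/
theorem sum_div_le_card_of_isMaxOn_sum_log_s19 {ι E : Type*} [Fintype ι] [AddCommGroup E]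
    [Module ℝ E] {P : Set E} (hP : Convex ℝ P) {u : ι → E → ℝ}
    (hu : ∀ i, ConcaveOn ℝ P (u i)) (hpos : ∀ i, ∀ θ ∈ P, 0 < u i θ) {θstar θ : E}
    (hstar : θstar ∈ P) (hθ : θ ∈ P) (hmax : IsMaxOn (fun θ => ∑ i, log (u i θ)) P θstar) :
    ∑ i, u i θ / u i θstar ≤ Fintype.card ι := by
  suffices ∑ i, (u i θ / u i θstar - 1) ≤ 0 by
    simpa [Finset.sum_sub_distrib] using this
  refine sum_nonpos_of_sum_log_one_add_mul_nonpos _ fun t ht => ?_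
  set θt := (1 - t) • θstar + t • θ
  have hθt : θt ∈ P := hP hstar hθ (by linarith [ht.2]) ht.1.le (by ring)
  have hstep : ∀ i, log (1 + t * (u i θ / u i θstar - 1)) ≤ log (u i θt) - log (u i θstar) := by
    intro i
    have hs := hpos i θstar hstar
    have hθi := hpos i θ hθ
    have hconc : (1 - t) * u i θstar + t * u i θ ≤ u i θt :=
      (hu i).2 hstar hθ (by linarith [ht.2]) ht.1.le (by ring)
    have hone : 1 + t * (u i θ / u i θstar - 1) = ((1 - t) * u i θstar + t * u i θ) / u i θstar := by
      field_simp
      ring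
    rw [← log_div (hpos i θt hθt).ne' hs.ne', hone]
    have hcomb : 0 < (1 - t) * u i θstar + t * u i θ :=
      add_pos_of_nonneg_of_pos (mul_nonneg (by linarith [ht.2]) hs.le) (mul_pos ht.1 hθi)
    exact log_le_log (div_pos hcomb hs) (by gcongr)
  calc ∑ i, log (1 + t * (u i θ / u i θstar - 1))
      ≤ ∑ i, (log (u i θt) - log (u i θstar)) := sum_le_sum fun i _ => hstep i
    _ ≤ 0 := by
      rw [Finset.sum_sub_distrib, sub_nonpos]
      exact isMaxOn_iff.mp hmax θt hθt

theorem card_lt_sum_div_of_blocking_s19 {ι : Type*} [Fintype ι] {v w : ι → ℝ}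
    (hv : ∀ i, 0 < v i) (hw : ∀ i, 0 < w i) (S : Finset ι)
    (hweak : ∀ i ∈ S, w i ≤ #S / Fintype.card ι * v i)
    (hstrict : ∃ i ∈ S, w i < #S / Fintype.card ι * v i) :
    (Fintype.card ι : ℝ) < ∑ i, v i / w i := by
  obtain ⟨i₀, hi₀, hlt⟩ := hstrict
  have hS : (0 : ℝ) < #S := by exact_mod_cast card_pos.mpr ⟨i₀, hi₀⟩
  have hn : (0 : ℝ) < Fintype.card ι := by exact_mod_cast Fintype.card_pos_iff.mpr ⟨i₀⟩
  have hratio : ∀ i, Fintype.card ι / #S ≤ v i / w i ↔ w i ≤ #S / Fintype.card ι * v i := by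
    intro i
    rw [div_le_div_iff₀ hS (hw i), div_mul_eq_mul_div, le_div_iff₀ hn]
    constructor <;> intro h <;> linarith
  have hratio_lt : Fintype.card ι / #S < v i₀ / w i₀ := by
    rw [div_lt_div_iff₀ hS (hw i₀)]
    rw [div_mul_eq_mul_div, lt_div_iff₀ hn] at hlt
    linarith
  calc (Fintype.card ι : ℝ) = ∑ _i ∈ S, (Fintype.card ι : ℝ) / #S := by
        rw [sum_const, nsmul_eq_mul]
        field_simp
    _ < ∑ i ∈ S, v i / w i :=
        sum_lt_sum (fun i hi => (hratio i).mpr (hweak i hi)) ⟨i₀, hi₀, hratio_lt⟩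
    _ ≤ ∑ i, v i / w i :=
        sum_le_sum_of_subset_of_nonneg (subset_univ S) fun i _ _ => (div_pos (hv i) (hw i)).le

theorem linear_regression_core_stable_general
    {d : ℕ} (P : Set (EuclideanSpace ℝ (Fin d)))
    (hPconv : Convex ℝ P)
    (n : ℕ) (m : Fin n → ℕ)
    (x : ∀ i : Fin n, Fin (m i) → EuclideanSpace ℝ (Fin d))
    (y : ∀ i : Fin n, Fin (m i) → ℝ)
    (ℓ : Fin n → EuclideanSpace ℝ (Fin d) → ℝ)
    (hℓ : ∀ i θ, ℓ i θ = (1 / (m i : ℝ)) * ∑ j : Fin (m i), (inner ℝ θ (x i j) - y i j) ^ 2)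
    (Mbound : Fin n → ℝ)
    (u : Fin n → EuclideanSpace ℝ (Fin d) → ℝ)
    (hu : ∀ i θ, u i θ = Mbound i - ℓ i θ)
    (hpos : ∀ i, ∀ θ ∈ P, 0 < u i θ) :
    (∀ i, ConcaveOn ℝ P (u i)) ∧
    (∀ θstar ∈ P,
      (∀ θ ∈ P, ∑ i : Fin n, Real.log (u i θ) ≤ ∑ i : Fin n, Real.log (u i θstar)) →
      ¬ ∃ θ' ∈ P, ∃ S : Finset (Fin n), S.Nonempty ∧
        (∀ i ∈ S, (S.card : ℝ) / (n : ℝ) * u i θ' ≥ u i θstar) ∧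
        (∃ i ∈ S, (S.card : ℝ) / (n : ℝ) * u i θ' > u i θstar)) := by
  have hconc : ∀ i, ConcaveOn ℝ P (u i) := by
    intro i
    have hloss := (convexOn_sum_sq_inner_sub univ (x i) (y i)).smul
      (by positivity : 0 ≤ 1 / (m i : ℝ))
    refine ((hloss.neg.add_const (Mbound i)).subset (subset_univ P) hPconv).congr fun θ _ => ?_
    simp [hu, hℓ, sub_eq_neg_add]
  refine ⟨hconc, fun θstar hstar hmax => ?_⟩
  rintro ⟨θ', hθ', S, -, hweak, hstrict⟩
  have hle :=
    sum_div_le_card_of_isMaxOn_sum_log_s19 hPconv hconc hpos hstar hθ' (isMaxOn_iff.mpr hmax)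
  have hlt := card_lt_sum_div_of_blocking_s19 (fun i => hpos i θ' hθ') (fun i => hpos i θstar hstar) S
    (by simpa using hweak) (by simpa using hstrict)
  exact hlt.not_ge hle

/-- Linear regression in federated learning. Each agent `i` has finitely many
samples and squared-error loss `ℓ i θ = (1/mᵢ) ∑ⱼ (⟪θ, x i j⟫ - y i j)²`; with
`u i θ = Mbound i - ℓ i θ` strictly positive on a convex compact `P`, each `u i` is concave
on `P` and any maximizer of `∑ i, log (u i θ)` over `P` is core-stable. -/
theorem linear_regression_core_stable
    {d : ℕ} (P : Set (EuclideanSpace ℝ (Fin d)))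
    (hPconv : Convex ℝ P) (hPcomp : IsCompact P)
    (n : ℕ) (m : Fin n → ℕ) (hm : ∀ i, 0 < m i)
    (x : ∀ i : Fin n, Fin (m i) → EuclideanSpace ℝ (Fin d))
    (y : ∀ i : Fin n, Fin (m i) → ℝ)
    (ℓ : Fin n → EuclideanSpace ℝ (Fin d) → ℝ)
    (hℓ : ∀ i θ, ℓ i θ = (1 / (m i : ℝ)) * ∑ j : Fin (m i), (inner ℝ θ (x i j) - y i j) ^ 2)
    (Mbound : Fin n → ℝ)
    (u : Fin n → EuclideanSpace ℝ (Fin d) → ℝ)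
    (hu : ∀ i θ, u i θ = Mbound i - ℓ i θ)
    (hpos : ∀ i, ∀ θ ∈ P, 0 < u i θ) :
    (∀ i, ConcaveOn ℝ P (u i)) ∧
    (∀ θstar ∈ P,
      (∀ θ ∈ P, ∑ i : Fin n, Real.log (u i θ) ≤ ∑ i : Fin n, Real.log (u i θstar)) →
      ¬ ∃ θ' ∈ P, ∃ S : Finset (Fin n), S.Nonempty ∧
        (∀ i ∈ S, (S.card : ℝ) / (n : ℝ) * u i θ' ≥ u i θstar) ∧
        (∃ i ∈ S, (S.card : ℝ) / (n : ℝ) * u i θ' > u i θstar)) :=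
  linear_regression_core_stable_general P hPconv n m x y ℓ hℓ Mbound u hu hpos
end
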